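/- Let ε be a real number with 0 < ε ≤ 1, let k = ⌈log₂(1/ε)⌉, and define, for real x ≥ 1, f(x) = 2^k · ⌊log₂ x⌋ + ⌊x / 2^{⌊log₂ x⌋ - k}⌋ - 2^k. Then f(1) = 0, and for every real U ≥ 2 and every x with 1 ≤ x ≤ U, one has f(x) < 2^{k+1} · log₂ U. -/

import Mathlib

/-! With `ℓ = ⌊log₂ x⌋` we have `x < 2^(ℓ+1)`, so the mantissa `⌊x / 2^(ℓ-k)⌋` is below
`2^(k+1)` and `f x < 2^k (ℓ + 1) ≤ 2^k (log₂ U + 1)`; since `log₂ U ≥ 1` this is at most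
`2^(k+1) log₂ U`. -/

open Real

namespace UniverseReduction

noncomputable def reductionMap (k : ℕ) (x : ℝ) : ℤ :=
  2 ^ k * ⌊logb 2 x⌋ + ⌊x / (2 : ℝ) ^ (⌊logb 2 x⌋ - (k : ℤ))⌋ - 2 ^ k

theorem reductionMap_one (k : ℕ) : reductionMap k 1 = 0 := by
  have hmantissa : ⌊(1 : ℝ) / 2 ^ (0 - (k : ℤ))⌋ = 2 ^ k := by
    rw [zero_sub, zpow_neg, zpow_natCast, one_div, inv_inv]
    exact_mod_cast Int.floor_intCast (2 ^ k : ℤ)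
  rw [reductionMap, logb_one, Int.floor_zero, hmantissa]
  ring

theorem lt_zpow_floor_logb_add_one {b x : ℝ} (hb : 1 < b) (hx : 0 < x) :
    x < b ^ (⌊logb b x⌋ + 1) := by
  rw [← rpow_intCast, ← logb_lt_iff_lt_rpow hb hx]
  exact_mod_cast Int.lt_floor_add_one (logb b x)

theorem floor_div_zpow_floor_logb_sub_lt {x : ℝ} (hx : 0 < x) (k : ℕ) :
    ⌊x / (2 : ℝ) ^ (⌊logb 2 x⌋ - (k : ℤ))⌋ < 2 ^ (k + 1) := by
  rw [Int.floor_lt, div_lt_iff₀ (zpow_pos two_pos _)]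
  push_cast
  calc x < (2 : ℝ) ^ (⌊logb 2 x⌋ + 1) := lt_zpow_floor_logb_add_one one_lt_two hx
    _ = (2 : ℝ) ^ (k + 1) * 2 ^ (⌊logb 2 x⌋ - (k : ℤ)) := by
      rw [← zpow_natCast, ← zpow_add₀ two_ne_zero]
      push_cast
      ring_nf

theorem reductionMap_lt {x : ℝ} (hx : 0 < x) (k : ℕ) :
    reductionMap k x < 2 ^ k * (⌊logb 2 x⌋ + 1) := by
  have hmantissa := floor_div_zpow_floor_logb_sub_lt hx k
  rw [pow_succ] at hmantissa
  rw [reductionMap]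
  linarith

theorem reductionMap_lt_two_pow_succ_mul_logb {U x : ℝ} (hU : 2 ≤ U) (hx : 0 < x)
    (hxU : x ≤ U) (k : ℕ) : (reductionMap k x : ℝ) < 2 ^ (k + 1) * logb 2 U := by
  have hlogU : 1 ≤ logb 2 U := by
    rwa [le_logb_iff_rpow_le one_lt_two (by linarith), rpow_one]
  have hfloor_le : (⌊logb 2 x⌋ : ℝ) ≤ logb 2 U :=
    (Int.floor_le _).trans (logb_le_logb_of_le one_lt_two hx hxU)
  calc (reductionMap k x : ℝ) < 2 ^ k * (⌊logb 2 x⌋ + 1) := by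
        exact_mod_cast reductionMap_lt hx k
    _ ≤ 2 ^ k * (logb 2 U + 1) := by gcongr
    _ ≤ 2 ^ k * (logb 2 U + logb 2 U) := by gcongr
    _ = 2 ^ (k + 1) * logb 2 U := by ring

end UniverseReduction

open UniverseReduction in
theorem reduction_map_range_general
    (k : ℕ)
    (f : ℝ → ℤ)
    (hf : ∀ x : ℝ, 1 ≤ x →
      f x = 2 ^ k * ⌊Real.logb 2 x⌋ + ⌊x / (2 : ℝ) ^ (⌊Real.logb 2 x⌋ - (k : ℤ))⌋ - 2 ^ k) :
    f 1 = 0 ∧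
      ∀ U : ℝ, 2 ≤ U → ∀ x : ℝ, 1 ≤ x → x ≤ U →
        (f x : ℝ) < 2 ^ (k + 1) * Real.logb 2 U := by
  have hf_eq : ∀ x : ℝ, 1 ≤ x → f x = reductionMap k x := hf
  refine ⟨(hf_eq 1 le_rfl).trans (reductionMap_one k), fun U hU x hx hxU => ?_⟩
  rw [hf_eq x hx]
  exact reductionMap_lt_two_pow_succ_mul_logb hU (by linarith) hxU k

/-- With `k = ⌈log₂(1/ε)⌉` for `0 < ε ≤ 1`, the universe-reduction map
`f(x) = 2^k · ⌊log₂ x⌋ + ⌊x / 2^(⌊log₂ x⌋ - k)⌋ - 2^k`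
satisfies `f(1) = 0` and `f(x) < 2^(k+1) · log₂ U` for all `1 ≤ x ≤ U`, `U ≥ 2`. -/
theorem reduction_map_range (ε : ℝ) (hε : 0 < ε) (hε1 : ε ≤ 1)
    (k : ℕ) (hk : (k : ℤ) = ⌈Real.logb 2 (1 / ε)⌉)
    (f : ℝ → ℤ)
    (hf : ∀ x : ℝ, 1 ≤ x →
      f x = 2 ^ k * ⌊Real.logb 2 x⌋ + ⌊x / (2 : ℝ) ^ (⌊Real.logb 2 x⌋ - (k : ℤ))⌋ - 2 ^ k) :
    f 1 = 0 ∧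
      ∀ U : ℝ, 2 ≤ U → ∀ x : ℝ, 1 ≤ x → x ≤ U →
        (f x : ℝ) < 2 ^ (k + 1) * Real.logb 2 U :=
  reduction_map_range_general k f hf
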